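/- arXiv:2211.15120 — 3 statements merged into one kernel-verified Lean document; each statement's English description precedes it below -/
import Mathlib

section
/- For fixed row index i, the IQE component d_i satisfies the triangle inequality: d_i(u,w) ≤ d_i(u,v) + d_i(v,w) for all u, v, w ∈ ℝ^{k×l}. -/
noncomputable def IQEcomp {k l : ℕ} (u v : Fin k → Fin l → ℝ) (i : Fin k) : ℝ :=
  (MeasureTheory.volume (⋃ j : Fin l, Set.Icc (u i j) (max (u i j) (v i j)))).toReal

theorem iqe_component_triangle {k l : ℕ} (i : Fin k) (u v w : Fin k → Fin l → ℝ) :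
    IQEcomp u w i ≤ IQEcomp u v i + IQEcomp v w i := by
  have hfin : ∀ a b : Fin k → Fin l → ℝ,
      MeasureTheory.volume (⋃ j : Fin l, Set.Icc (a i j) (max (a i j) (b i j))) ≠ ⊤ := by
    intro a b
    refine ne_top_of_le_ne_top ?_ (MeasureTheory.measure_iUnion_fintype_le _ _)
    simp [Real.volume_Icc, ENNReal.sum_lt_top, ENNReal.ofReal_lt_top]
  have hsub : (⋃ j : Fin l, Set.Icc (u i j) (max (u i j) (w i j))) ⊆
      (⋃ j : Fin l, Set.Icc (u i j) (max (u i j) (v i j))) ∪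
      (⋃ j : Fin l, Set.Icc (v i j) (max (v i j) (w i j))) := by
    intro x hx
    obtain ⟨_, ⟨j, rfl⟩, hu, hw⟩ := hx
    by_cases h : x ≤ max (u i j) (v i j)
    · exact Or.inl (Set.mem_iUnion.2 ⟨j, hu, h⟩)
    · push_neg at h
      have hv : v i j ≤ x := le_of_lt (lt_of_le_of_lt (le_max_right _ _) h)
      have hxu : u i j < x := lt_of_le_of_lt (le_max_left _ _) h
      have hxw : x ≤ w i j := by
        rcases max_cases (u i j) (w i j) with ⟨he, _⟩ | ⟨he, _⟩
        · exact absurd (hw.trans_eq he) (not_le_of_gt hxu)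
        · exact hw.trans_eq he
      exact Or.inr (Set.mem_iUnion.2 ⟨j, hv, hxw.trans (le_max_right _ _)⟩)
  have hle := (MeasureTheory.measure_mono hsub).trans (MeasureTheory.measure_union_le (μ := MeasureTheory.volume) _ _)
  exact ENNReal.toReal_le_add hle (hfin u v) (hfin v w)
end

section
/- IQE-sum, defined as d(u,v) := Σ_{i=1}^k d_i(u,v) where each d_i is an IQE component, is a quasimetric on ℝ^{k×l}: it is nonnegative, satisfies d(u,u)=0, and satisfies the triangle inequality. -/
noncomputable def IQEsum {k l : ℕ} (u v : Fin k → Fin l → ℝ) : ℝ :=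
  ∑ i : Fin k, IQEcomp u v i

open MeasureTheory Set

lemma iqe_vol_ne_top {l : ℕ} (a b : Fin l → ℝ) :
    volume (⋃ j : Fin l, Icc (a j) (max (a j) (b j))) ≠ ⊤ := by
  refine ne_top_of_le_ne_top ?_ (measure_iUnion_fintype_le _ _)
  refine (ENNReal.sum_lt_top.mpr fun j _ => ?_).ne
  simp [Real.volume_Icc]

lemma iqe_subset3 (a b c : ℝ) :
    Icc a (max a c) ⊆ Icc a (max a b) ∪ Icc b (max b c) := by
  intro x hx
  rcases le_or_gt x (max a b) with h | h
  · exact Or.inl ⟨hx.1, h⟩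
  · refine Or.inr ⟨((le_max_right a b).trans_lt h).le, ?_⟩
    have hax : a < x := (le_max_left a b).trans_lt h
    rcases le_total c a with hca | hac
    · exact absurd (hx.2.trans (max_le le_rfl hca)) hax.not_ge
    · have hxc : x ≤ c := le_of_not_gt fun hcx => (max_lt hax hcx).not_ge hx.2
      exact hxc.trans (le_max_right b c)

theorem iqe_sum_quasimetric {k l : ℕ} :
    (∀ u v : Fin k → Fin l → ℝ, 0 ≤ IQEsum u v) ∧
    (∀ u : Fin k → Fin l → ℝ, IQEsum u u = 0) ∧
    (∀ u v w : Fin k → Fin l → ℝ, IQEsum u w ≤ IQEsum u v + IQEsum v w) := by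
  refine ⟨fun u v => Finset.sum_nonneg fun i _ => ENNReal.toReal_nonneg, ?_, ?_⟩
  · intro u
    refine Finset.sum_eq_zero fun i _ => ?_
    unfold IQEcomp
    simp only [max_self, Icc_self]
    rw [measure_iUnion_null fun j => measure_singleton _]
    simp
  · intro u v w
    rw [IQEsum, IQEsum, IQEsum, ← Finset.sum_add_distrib]
    refine Finset.sum_le_sum fun i _ => ?_
    unfold IQEcomp
    refine ENNReal.toReal_le_add ?_ (iqe_vol_ne_top _ _) (iqe_vol_ne_top _ _)
    refine le_trans (measure_mono ?_) (measure_union_le _ _)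
    refine iUnion_subset fun j => ?_
    refine (iqe_subset3 (u i j) (v i j) (w i j)).trans ?_
    exact union_subset_union (subset_iUnion (fun j => Icc (u i j) (max (u i j) (v i j))) j) (subset_iUnion (fun j => Icc (v i j) (max (v i j) (w i j))) j)
end

section
/- For i ≤ i' in [n], the set ⋃_j [(e_i)_j, max((e_i)_j, (e_{i'})_j)] is empty or has measure 0; for i > i', it equals [0,1] and has measure 1. Consequently the IQE component on the vectors e_i exactly represents the comparison quasimetric κ(i,i') := 1[i > i'] on [n]. -/
/-- `e i ∈ {0,1}^n`: first `i` coordinates are `0`, remaining are `1`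
(coordinates `j` are 0-indexed, so `(e i) j = 0` iff `j < i`). -/
def eVec (n : ℕ) (i : ℕ) (j : Fin n) : ℝ :=
  if (j : ℕ) < i then 0 else 1

/-! For `i ≤ i'` every interval `[(e_i)_j, max ((e_i)_j, (e_{i'})_j)]` is a single point, so the
union is finite. For `i' < i` every interval lies in `[0, 1]`, and the coordinate `j = i'` gives all
of `[0, 1]`. -/

open Set MeasureTheory

section IntervalUnion

variable {ι : Type*} {u v : ι → ℝ}

theorem iUnion_Icc_max_eq_range_of_le (h : v ≤ u) :
    ⋃ j, Icc (u j) (max (u j) (v j)) = range u := by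
  simp only [max_eq_left (h _), Icc_self, iUnion_singleton_eq_range]

theorem iUnion_Icc_max_eq_Icc {a b : ℝ} (hu : ∀ j, u j ∈ Icc a b) (hv : ∀ j, v j ∈ Icc a b)
    (j₀ : ι) (hu₀ : u j₀ = a) (hv₀ : v j₀ = b) :
    ⋃ j, Icc (u j) (max (u j) (v j)) = Icc a b := by
  refine Subset.antisymm (iUnion_subset fun j => Icc_subset_Icc (hu j).1 ?_) ?_
  · exact max_le (hu j).2 (hv j).2
  · refine subset_iUnion_of_subset j₀ ?_
    rw [hu₀, hv₀, max_eq_right (hu₀ ▸ (hu j₀).1.trans (hu j₀).2)]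

end IntervalUnion

theorem eVec_mem_Icc (n i : ℕ) (j : Fin n) : eVec n i j ∈ Icc (0 : ℝ) 1 := by
  unfold eVec; split_ifs <;> norm_num

theorem eVec_le_of_le {n i i' : ℕ} (h : i ≤ i') (j : Fin n) : eVec n i' j ≤ eVec n i j := by
  unfold eVec; split_ifs <;> first | omega | norm_num

theorem eVec_of_lt {n i : ℕ} {j : Fin n} (h : (j : ℕ) < i) : eVec n i j = 0 := if_pos h

theorem eVec_of_le {n i : ℕ} {j : Fin n} (h : i ≤ j) : eVec n i j = 1 := if_neg (not_lt.2 h)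

theorem iqe_on_eVecs_represents_comparison_general {n : ℕ} (i i' : ℕ)
    (hi : 1 ≤ i ∧ i ≤ n) :
    (i ≤ i' →
      MeasureTheory.volume
        (⋃ j : Fin n, Set.Icc (eVec n i j) (max (eVec n i j) (eVec n i' j))) = 0) ∧
    (i' < i →
      (⋃ j : Fin n, Set.Icc (eVec n i j) (max (eVec n i j) (eVec n i' j)))
        = Set.Icc (0 : ℝ) 1 ∧
      MeasureTheory.volume
        (⋃ j : Fin n, Set.Icc (eVec n i j) (max (eVec n i j) (eVec n i' j))) = 1) ∧
    (MeasureTheory.volume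
        (⋃ j : Fin n, Set.Icc (eVec n i j) (max (eVec n i j) (eVec n i' j)))).toReal
      = if i ≤ i' then 0 else 1 := by
  have h_le (h : i ≤ i') :
      volume (⋃ j : Fin n, Icc (eVec n i j) (max (eVec n i j) (eVec n i' j))) = 0 := by
    rw [iUnion_Icc_max_eq_range_of_le (eVec_le_of_le h)]
    exact (finite_range _).measure_zero _
  have h_lt (h : i' < i) :
      ⋃ j : Fin n, Icc (eVec n i j) (max (eVec n i j) (eVec n i' j)) = Icc 0 1 :=
    iUnion_Icc_max_eq_Icc (eVec_mem_Icc n i) (eVec_mem_Icc n i') ⟨i', h.trans_le hi.2⟩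
      (eVec_of_lt h) (eVec_of_le le_rfl)
  refine ⟨h_le, fun h => ⟨h_lt h, by simp [h_lt h]⟩, ?_⟩
  split_ifs with h
  · simp [h_le h]
  · simp [h_lt (not_le.1 h)]

theorem iqe_on_eVecs_represents_comparison {n : ℕ} (i i' : ℕ)
    (hi : 1 ≤ i ∧ i ≤ n) (hi' : 1 ≤ i' ∧ i' ≤ n) :
    (i ≤ i' →
      MeasureTheory.volume
        (⋃ j : Fin n, Set.Icc (eVec n i j) (max (eVec n i j) (eVec n i' j))) = 0) ∧
    (i' < i →
      (⋃ j : Fin n, Set.Icc (eVec n i j) (max (eVec n i j) (eVec n i' j)))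
        = Set.Icc (0 : ℝ) 1 ∧
      MeasureTheory.volume
        (⋃ j : Fin n, Set.Icc (eVec n i j) (max (eVec n i j) (eVec n i' j))) = 1) ∧
    (MeasureTheory.volume
        (⋃ j : Fin n, Set.Icc (eVec n i j) (max (eVec n i j) (eVec n i' j)))).toReal
      = if i ≤ i' then 0 else 1 :=
  iqe_on_eVecs_represents_comparison_general i i' hi
end
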